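/- Let n ∈ ℕ, let Z be a nonempty compact subset of ℝ^{n+1}, μ₀ a Borel probability measure on Z, U and V nonempty compact metric spaces, λ > 0, L ≥ 0 and k > 0. Let F : ℝ^{n+1} × U × V → ℝ^{n+1} and ℓ : ℝ^{n+1} × U × V → ℝ be bounded continuous with ‖F(w,u,v) − F(w',u,v)‖ ≤ L‖w − w'‖ and |ℓ(w,u,v) − ℓ(w',u,v)| ≤ L‖w − w'‖ for all w, w', u, v. Let O ⊆ C(Z,Z) be open and let W₁, W₂ : C(Z,Z) → ℝ be bounded and continuous, with |W_i(Φ) − W_i(Ψ)| ≤ k‖Φ − Ψ‖_{L²_{μ₀}} for all Φ, Ψ ∈ C(Z,Z) and i = 1, 2. Assume that W₁ is a viscosity subsolution of −λw + 𝓗(μ₀,Φ,Dw) = 0 on O, that W₂ is a viscosity supersolution of the same equation on O, and that W₁(Φ) ≤ W₂(Φ) for every Φ ∈ C(Z,Z) ∖ O. Then W₁(Φ) ≤ W₂(Φ) for every Φ ∈ O. -/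

import Mathlib

/-!
Doubling of variables with an `L²` penalization. Let `M := sup (W₁ - W₂)` and `ε > 0`. Since
`C(Z,Z)` is not locally compact, the doubled functional
`(Φ, Φ') ↦ W₁ Φ - W₂ Φ' - ε⁻¹ ‖Φ - Φ'‖²_{L²}` need not attain its supremum; Ekeland's variational
principle on the complete space `C(Z,Z)²` gives a point `(Φ₁, Φ₂)` that is a maximum up to the
perturbation `ε · dist` and improves on an `ε`-maximizer of `W₁ - W₂` on the diagonal. The penalty
then acts as a test function: `p = 2ε⁻¹ (Φ₁ - Φ₂)` lies in `D⁺_ε W₁(Φ₁)` and in `D⁻_ε W₂(Φ₂)`,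
and the `L²`-Lipschitz bound on `W₂` forces `‖Φ₁ - Φ₂‖_{L²} ≤ (k + 1) ε`. If `Φ₁` or `Φ₂` lies
outside `O`, the boundary inequality gives `W₁ Φ₁ - W₂ Φ₂ ≤ k ‖Φ₁ - Φ₂‖_{L²}`; otherwise
subtracting the two viscosity inequalities, and using that `𝓗` is Lipschitz in `Φ` with weight
`1 + ‖p‖`, bounds `λ (W₁ Φ₁ - W₂ Φ₂)`. Either way `λ (M - ε) ≤ λ (W₁ Φ₁ - W₂ Φ₂) = O(ε)`, and
`ε → 0` gives `M ≤ 0`.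
-/

open MeasureTheory Set

noncomputable section

abbrev Euc (n : ℕ) : Type := EuclideanSpace ℝ (Fin (n + 1))

/-- The sup norm `‖Ψ‖_∞ = sup_{z ∈ Z} ‖Ψ z‖` of a continuous map `Ψ : Z → ℝ^{n+1}`. -/
def supN {n : ℕ} {Zs : Set (Euc n)} (Ψ : C(↥Zs, Euc n)) : ℝ := ⨆ z : ↥Zs, ‖Ψ z‖

/-- The map `Φ + Ψ`, as an element of `C(Z,Z)`, given that it maps into `Z`. -/
def addIn {n : ℕ} {Zs : Set (Euc n)} (Φ : C(↥Zs, ↥Zs)) (Ψ : C(↥Zs, Euc n))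
    (h : ∀ z : ↥Zs, ((Φ z : Euc n) + Ψ z) ∈ Zs) : C(↥Zs, ↥Zs) :=
  ⟨fun z => ⟨(Φ z : Euc n) + Ψ z, h z⟩,
    Continuous.subtype_mk ((continuous_subtype_val.comp Φ.continuous).add Ψ.continuous) _⟩

/-- `p` belongs to the `δ`-superdifferential `D⁺_δ w(Φ₀)`. -/
def memSuperDiff {n : ℕ} {Zs : Set (Euc n)} (μ₀ : Measure ↥Zs) (δ : ℝ)
    (w : C(↥Zs, ↥Zs) → ℝ) (Φ₀ : C(↥Zs, ↥Zs)) (p : C(↥Zs, Euc n)) : Prop :=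
  ∀ ε : ℝ, 0 < ε → ∃ r : ℝ, 0 < r ∧
    ∀ (Ψ : C(↥Zs, Euc n)) (h : ∀ z : ↥Zs, ((Φ₀ z : Euc n) + Ψ z) ∈ Zs),
      0 < supN Ψ → supN Ψ ≤ r →
      w (addIn Φ₀ Ψ h) - w Φ₀ - ∫ z, (inner ℝ (Ψ z) (p z) : ℝ) ∂μ₀ ≤ (δ + ε) * supN Ψ

/-- `p` belongs to the `δ`-subdifferential `D⁻_δ w(Φ₀)`. -/
def memSubDiff {n : ℕ} {Zs : Set (Euc n)} (μ₀ : Measure ↥Zs) (δ : ℝ)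
    (w : C(↥Zs, ↥Zs) → ℝ) (Φ₀ : C(↥Zs, ↥Zs)) (p : C(↥Zs, Euc n)) : Prop :=
  ∀ ε : ℝ, 0 < ε → ∃ r : ℝ, 0 < r ∧
    ∀ (Ψ : C(↥Zs, Euc n)) (h : ∀ z : ↥Zs, ((Φ₀ z : Euc n) + Ψ z) ∈ Zs),
      0 < supN Ψ → supN Ψ ≤ r →
      -((δ + ε) * supN Ψ) ≤ w (addIn Φ₀ Ψ h) - w Φ₀ - ∫ z, (inner ℝ (Ψ z) (p z) : ℝ) ∂μ₀

/-- The Hamiltonian `𝓗(μ₀,Φ,p)`. -/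
def Ham {n : ℕ} {Zs : Set (Euc n)} {U V : Type} [TopologicalSpace U] [TopologicalSpace V]
    (μ₀ : Measure ↥Zs) (F : Euc n → U → V → Euc n) (l : Euc n → U → V → ℝ)
    (Φ : C(↥Zs, ↥Zs)) (p : C(↥Zs, Euc n)) : ℝ :=
  ⨅ u : U, ⨆ v : V,
    ∫ z, (l ((Φ z : Euc n)) u v + (inner ℝ (F ((Φ z : Euc n)) u v) (p z) : ℝ)) ∂μ₀

/-- `w` is a viscosity subsolution of `-λ w + 𝓗(μ₀,Φ,Dw) = 0` on `O`. -/
def IsViscositySubsolution {n : ℕ} {Zs : Set (Euc n)} {U V : Type}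
    [TopologicalSpace U] [TopologicalSpace V] (lam : ℝ) (μ₀ : Measure ↥Zs)
    (F : Euc n → U → V → Euc n) (l : Euc n → U → V → ℝ)
    (O : Set C(↥Zs, ↥Zs)) (w : C(↥Zs, ↥Zs) → ℝ) : Prop :=
  ∃ C : ℝ, 0 < C ∧ ∀ δ : ℝ, 0 < δ → ∀ Φ₀ ∈ O, ∀ p : C(↥Zs, Euc n),
    memSuperDiff μ₀ δ w Φ₀ p → -(C * δ) ≤ -(lam * w Φ₀) + Ham μ₀ F l Φ₀ p

/-- `w` is a viscosity supersolution of `-λ w + 𝓗(μ₀,Φ,Dw) = 0` on `O`. -/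
def IsViscositySupersolution {n : ℕ} {Zs : Set (Euc n)} {U V : Type}
    [TopologicalSpace U] [TopologicalSpace V] (lam : ℝ) (μ₀ : Measure ↥Zs)
    (F : Euc n → U → V → Euc n) (l : Euc n → U → V → ℝ)
    (O : Set C(↥Zs, ↥Zs)) (w : C(↥Zs, ↥Zs) → ℝ) : Prop :=
  ∃ C : ℝ, 0 < C ∧ ∀ δ : ℝ, 0 < δ → ∀ Φ₀ ∈ O, ∀ p : C(↥Zs, Euc n),
    memSubDiff μ₀ δ w Φ₀ p → -(lam * w Φ₀) + Ham μ₀ F l Φ₀ p ≤ C * δ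

/-- The `L²_{μ₀}` distance between two elements of `C(Z,Z)`. -/
def L2dist {n : ℕ} {Zs : Set (Euc n)} (μ₀ : Measure ↥Zs) (Φ Ψ : C(↥Zs, ↥Zs)) : ℝ :=
  Real.sqrt (∫ z, ‖(Φ z : Euc n) - (Ψ z : Euc n)‖ ^ 2 ∂μ₀)

open Filter Topology

/-- Ekeland's variational principle (weak form). -/
theorem exists_forall_le_add_mul_dist {X : Type*} [MetricSpace X] [CompleteSpace X]
    {f : X → ℝ} (hf : UpperSemicontinuous f) (hbdd : BddAbove (range f)) (x₀ : X)
    {ε : ℝ} (hε : 0 < ε) :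
    ∃ x, f x₀ ≤ f x ∧ ∀ y, f y ≤ f x + ε * dist y x := by
  -- `S x` consists of the points improving on `x` by `ε` times their distance to `x`; choosing
  -- each point almost maximal on the previous `S` shrinks the nested sets `S (a n)` to a point.
  set S : X → Set X := fun x => {y | f x + ε * dist x y ≤ f y} with hS
  have mem_self (x : X) : x ∈ S x := by simp [hS]
  have subset_of_mem {x y : X} (hy : y ∈ S x) : S y ⊆ S x := fun z hz => by
    have hy' : f x + ε * dist x y ≤ f y := hy
    have hz' : f y + ε * dist y z ≤ f z := hz
    have := mul_le_mul_of_nonneg_left (dist_triangle x y z) hε.le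
    show f x + ε * dist x z ≤ f z
    linarith
  have isClosed (x : X) : IsClosed (S x) := by
    have : UpperSemicontinuous fun y => f y - ε * dist x y :=
      hf.add (continuous_const.mul (continuous_const.dist continuous_id)).neg.upperSemicontinuous
    convert this.isClosed_preimage (f x) using 1
    ext y
    simp [hS, le_sub_iff_add_le]
  have step (x : X) (n : ℕ) : ∃ y ∈ S x, ∀ z ∈ S y, dist y z ≤ (1 / 2) ^ n / ε := by
    obtain ⟨_, ⟨y, hy, rfl⟩, hlt⟩ :=
      exists_lt_of_lt_csSup (⟨f x, x, mem_self x, rfl⟩ : (f '' S x).Nonempty)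
        (sub_lt_self (sSup (f '' S x)) (pow_pos one_half_pos n))
    refine ⟨y, hy, fun z hz => ?_⟩
    have hz_le : f z ≤ sSup (f '' S x) :=
      le_csSup (hbdd.mono (image_subset_range f _)) ⟨z, subset_of_mem hy hz, rfl⟩
    have hz' : f y + ε * dist y z ≤ f z := hz
    rw [le_div_iff₀ hε]
    linarith
  choose next next_mem next_small using step
  let a : ℕ → X := fun n => Nat.rec x₀ (fun n x => next x n) n
  have anti : Antitone fun n => S (a n) :=
    antitone_nat_of_succ_le fun n => subset_of_mem (next_mem (a n) n)
  have mem_of_le {m n : ℕ} (h : m ≤ n) : a (n + 1) ∈ S (a (m + 1)) :=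
    anti (Nat.succ_le_succ h) (mem_self _)
  have hb : Tendsto (fun n : ℕ => (1 / 2 : ℝ) ^ n / ε) atTop (𝓝 0) := by
    simpa using (tendsto_pow_atTop_nhds_zero_of_lt_one (by norm_num : (0 : ℝ) ≤ 1 / 2)
      (by norm_num)).div_const ε
  obtain ⟨x, hx⟩ := cauchySeq_tendsto_of_complete <|
    cauchySeq_of_le_tendsto_0' (fun n => (1 / 2 : ℝ) ^ n / ε)
      (fun m n h => next_small (a m) m _ (mem_of_le h)) hb
  have x_mem (m : ℕ) : x ∈ S (a (m + 1)) :=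
    (isClosed _).mem_of_tendsto hx (eventually_atTop.2 ⟨m, fun n => mem_of_le⟩)
  refine ⟨x, ?_, fun y => ?_⟩
  · have hx₀ : f x₀ + ε * dist x₀ x ≤ f x := anti (Nat.zero_le 1) (x_mem 0)
    nlinarith [dist_nonneg (x := x₀) (y := x)]
  · by_contra! hy
    have hyS : y ∈ S x := by
      show f x + ε * dist x y ≤ f y
      rw [dist_comm]
      exact hy.le
    have hb2 : Tendsto (fun n : ℕ => 2 * ((1 / 2 : ℝ) ^ n / ε)) atTop (𝓝 0) := by
      simpa using hb.const_mul 2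
    have hyx : dist y x ≤ 0 := ge_of_tendsto' hb2 fun m => by
      have h1 := next_small (a m) m y (subset_of_mem (x_mem m) hyS)
      have h2 := next_small (a m) m x (x_mem m)
      linarith [dist_triangle_left y x (a (m + 1))]
    rw [dist_le_zero.mp hyx, dist_self] at hy
    linarith

theorem iInf_iSup_le_iInf_iSup_add {ι κ : Type*} [Nonempty ι] [Nonempty κ] {f g : ι → κ → ℝ}
    {c : ℝ} (hg : ∀ i, BddAbove (range (g i))) (hf : BddBelow (range fun i => ⨆ j, f i j))
    (h : ∀ i j, f i j ≤ g i j + c) :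
    ⨅ i, ⨆ j, f i j ≤ (⨅ i, ⨆ j, g i j) + c := by
  rw [← sub_le_iff_le_add]
  refine le_ciInf fun i => sub_le_iff_le_add.2 ?_
  calc ⨅ i, ⨆ j, f i j ≤ ⨆ j, f i j := ciInf_le hf i
    _ ≤ (⨆ j, g i j) + c := ciSup_le fun j => (h i j).trans (by gcongr; exact le_ciSup (hg i) j)

theorem nonpos_of_forall_pos_le_mul {a K : ℝ} (h : ∀ ε > 0, a ≤ K * ε) : a ≤ 0 := by
  have hK : Tendsto (fun ε => K * ε) (𝓝[>] 0) (𝓝 0) := by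
    simpa using ((continuous_const_mul K).tendsto 0).mono_left nhdsWithin_le_nhds
  exact ge_of_tendsto hK (eventually_nhdsWithin_of_forall h)

theorem Continuous.integrable_of_compactSpace {X E : Type*} [TopologicalSpace X]
    [MeasurableSpace X] [OpensMeasurableSpace X] [CompactSpace X] [NormedAddCommGroup E]
    {μ : Measure X} [IsFiniteMeasure μ] {g : X → E} (hg : Continuous g) : Integrable g μ :=
  hg.integrable_of_hasCompactSupport (HasCompactSupport.of_compactSpace g)

section ContinuousSelfMaps

variable {n : ℕ} {Zs : Set (Euc n)}

def toEuc (Φ : C(↥Zs, ↥Zs)) : C(↥Zs, Euc n) := (ContinuousMap.mk Subtype.val).comp Φ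

@[simp]
theorem toEuc_apply (Φ : C(↥Zs, ↥Zs)) (z : ↥Zs) : toEuc Φ z = (Φ z : Euc n) := rfl

@[fun_prop]
theorem continuous_toEuc : Continuous (toEuc : C(↥Zs, ↥Zs) → C(↥Zs, Euc n)) :=
  ContinuousMap.continuous_postcomp _

@[simp]
theorem coe_addIn_apply (Φ : C(↥Zs, ↥Zs)) (Ψ : C(↥Zs, Euc n))
    (h : ∀ z : ↥Zs, ((Φ z : Euc n) + Ψ z) ∈ Zs) (z : ↥Zs) :
    (addIn Φ Ψ h z : Euc n) = Φ z + Ψ z := rfl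

theorem supN_eq_norm [CompactSpace Zs] (Ψ : C(↥Zs, Euc n)) : supN Ψ = ‖Ψ‖ :=
  (ContinuousMap.norm_eq_iSup_norm Ψ).symm

theorem supN_nonneg [CompactSpace Zs] (Ψ : C(↥Zs, Euc n)) : 0 ≤ supN Ψ :=
  (supN_eq_norm Ψ).symm ▸ norm_nonneg Ψ

theorem dist_addIn [CompactSpace Zs] (Φ : C(↥Zs, ↥Zs)) (Ψ : C(↥Zs, Euc n))
    (h : ∀ z : ↥Zs, ((Φ z : Euc n) + Ψ z) ∈ Zs) : dist (addIn Φ Ψ h) Φ = supN Ψ := by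
  rw [ContinuousMap.dist_eq_iSup, supN]
  congr! 2 with z
  rw [Subtype.dist_eq, dist_eq_norm]
  exact congrArg norm (add_sub_cancel_left _ _)

theorem integral_norm_sq_le_supN_sq [CompactSpace Zs] (μ : Measure ↥Zs) [IsProbabilityMeasure μ]
    (Ψ : C(↥Zs, Euc n)) : ∫ z, ‖Ψ z‖ ^ 2 ∂μ ≤ supN Ψ ^ 2 := by
  rw [supN_eq_norm]
  calc ∫ z, ‖Ψ z‖ ^ 2 ∂μ ≤ ∫ _, ‖Ψ‖ ^ 2 ∂μ :=
        integral_mono (by fun_prop : Continuous _).integrable_of_compactSpace (integrable_const _)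
          fun z => by gcongr; exact Ψ.norm_coe_le_norm z
    _ = ‖Ψ‖ ^ 2 := by simp

theorem L2dist_sq (μ : Measure ↥Zs) (Φ Ψ : C(↥Zs, ↥Zs)) :
    L2dist μ Φ Ψ ^ 2 = ∫ z, ‖toEuc Φ z - toEuc Ψ z‖ ^ 2 ∂μ :=
  Real.sq_sqrt (integral_nonneg fun _ => sq_nonneg _)

theorem L2dist_comm (μ : Measure ↥Zs) (Φ Ψ : C(↥Zs, ↥Zs)) : L2dist μ Φ Ψ = L2dist μ Ψ Φ := by
  simp only [L2dist, norm_sub_rev]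

theorem L2dist_self (μ : Measure ↥Zs) (Φ : C(↥Zs, ↥Zs)) : L2dist μ Φ Φ = 0 := by
  simp [L2dist]

theorem integral_norm_sub_le_L2dist [CompactSpace Zs] (μ : Measure ↥Zs) [IsProbabilityMeasure μ]
    (Φ Φ' : C(↥Zs, ↥Zs)) : ∫ z, ‖toEuc Φ z - toEuc Φ' z‖ ∂μ ≤ L2dist μ Φ Φ' := by
  set g : C(↥Zs, ℝ) := ⟨fun z => ‖toEuc Φ z - toEuc Φ' z‖, by fun_prop⟩
  have hg : MemLp g 2 μ :=
    MemLp.of_bound g.continuous.aestronglyMeasurable ‖g‖ (ae_of_all _ g.norm_coe_le_norm)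
  have hvar := ProbabilityTheory.variance_eq_sub hg ▸ ProbabilityTheory.variance_nonneg g μ
  rw [L2dist]
  apply Real.le_sqrt_of_sq_le
  simpa [g] using hvar

theorem L2dist_addIn_sq [CompactSpace Zs] (μ : Measure ↥Zs) [IsFiniteMeasure μ]
    (Φ Φ' : C(↥Zs, ↥Zs)) (Ψ : C(↥Zs, Euc n)) (h : ∀ z : ↥Zs, ((Φ z : Euc n) + Ψ z) ∈ Zs) :
    L2dist μ (addIn Φ Ψ h) Φ' ^ 2 = L2dist μ Φ Φ' ^ 2
      + 2 * ∫ z, inner ℝ (Ψ z) ((toEuc Φ - toEuc Φ') z) ∂μ + ∫ z, ‖Ψ z‖ ^ 2 ∂μ := by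
  set Δ := toEuc Φ - toEuc Φ'
  have expand (z : ↥Zs) : ‖toEuc (addIn Φ Ψ h) z - toEuc Φ' z‖ ^ 2
      = ‖Δ z‖ ^ 2 + 2 * inner ℝ (Ψ z) (Δ z) + ‖Ψ z‖ ^ 2 := by
    rw [real_inner_comm, ← norm_add_sq_real]
    congr 2
    simp only [Δ, toEuc_apply, ContinuousMap.sub_apply, coe_addIn_apply]
    abel
  have hΔ : Integrable (fun z => ‖Δ z‖ ^ 2) μ :=
    (by fun_prop : Continuous _).integrable_of_compactSpace
  have hΨ : Integrable (fun z => ‖Ψ z‖ ^ 2) μ :=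
    (by fun_prop : Continuous _).integrable_of_compactSpace
  have hΔΨ : Integrable (fun z => 2 * inner ℝ (Ψ z) (Δ z)) μ :=
    (by fun_prop : Continuous _).integrable_of_compactSpace
  have hsum : Integrable (fun z => ‖Δ z‖ ^ 2 + 2 * inner ℝ (Ψ z) (Δ z)) μ := hΔ.add hΔΨ
  simp_rw [L2dist_sq, expand]
  rw [integral_add hsum hΨ, integral_add hΔ hΔΨ, integral_const_mul]
  rfl

theorem continuous_L2dist_sq [CompactSpace Zs] (μ : Measure ↥Zs) [IsFiniteMeasure μ] :
    Continuous fun q : C(↥Zs, ↥Zs) × C(↥Zs, ↥Zs) => L2dist μ q.1 q.2 ^ 2 := by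
  simp_rw [L2dist_sq]
  refine continuous_of_dominated (bound := fun _ => Metric.diam (univ : Set ↥Zs) ^ 2)
    (fun q => (by fun_prop : Continuous _).aestronglyMeasurable) (fun q => ae_of_all _ fun z => ?_)
    (integrable_const _) (ae_of_all _ fun z => by fun_prop)
  rw [norm_pow, norm_norm, toEuc_apply, toEuc_apply, ← dist_eq_norm, ← Subtype.dist_eq]
  gcongr
  exact Metric.dist_le_diam_of_mem isCompact_univ.isBounded (mem_univ _) (mem_univ _)

theorem memSuperDiff_of_le_penalized [CompactSpace Zs] (μ : Measure ↥Zs)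
    [IsProbabilityMeasure μ] {w : C(↥Zs, ↥Zs) → ℝ} {Φ Φ' : C(↥Zs, ↥Zs)} {c δ : ℝ} (hc : 0 < c)
    (h : ∀ (Ψ : C(↥Zs, Euc n)) (hΨ : ∀ z : ↥Zs, ((Φ z : Euc n) + Ψ z) ∈ Zs),
      w (addIn Φ Ψ hΨ) - c * L2dist μ (addIn Φ Ψ hΨ) Φ' ^ 2
        ≤ w Φ - c * L2dist μ Φ Φ' ^ 2 + δ * supN Ψ) :
    memSuperDiff μ δ w Φ ((2 * c) • (toEuc Φ - toEuc Φ')) := by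
  intro ε hε
  -- the quadratic remainder `c ‖Ψ‖²` of the penalty is at most `ε ‖Ψ‖` once `‖Ψ‖ ≤ ε / c`
  refine ⟨ε / c, div_pos hε hc, fun Ψ hΨ hpos hle => ?_⟩
  have hpen := h Ψ hΨ
  rw [L2dist_addIn_sq] at hpen
  have hlin : ∫ z, inner ℝ (Ψ z) (((2 * c) • (toEuc Φ - toEuc Φ')) z) ∂μ
      = 2 * c * ∫ z, inner ℝ (Ψ z) ((toEuc Φ - toEuc Φ') z) ∂μ := by
    simp only [ContinuousMap.smul_apply, real_inner_smul_right, integral_const_mul]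
  have hquad : c * ∫ z, ‖Ψ z‖ ^ 2 ∂μ ≤ ε * supN Ψ :=
    calc c * ∫ z, ‖Ψ z‖ ^ 2 ∂μ ≤ c * supN Ψ ^ 2 := by
          gcongr; exact integral_norm_sq_le_supN_sq μ Ψ
      _ ≤ c * (ε / c) * supN Ψ := by rw [sq, ← mul_assoc]; gcongr
      _ = ε * supN Ψ := by field_simp
  rw [hlin]
  linarith

theorem memSubDiff_iff_memSuperDiff_neg (μ : Measure ↥Zs) (δ : ℝ) (w : C(↥Zs, ↥Zs) → ℝ)
    (Φ : C(↥Zs, ↥Zs)) (p : C(↥Zs, Euc n)) :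
    memSubDiff μ δ w Φ p ↔ memSuperDiff μ δ (fun Φ => -w Φ) Φ (-p) := by
  simp only [memSubDiff, memSuperDiff, ContinuousMap.neg_apply, inner_neg_right, integral_neg]
  refine forall₂_congr fun ε _ => exists_congr fun r => and_congr_right fun _ =>
    forall₂_congr fun Ψ hΨ => imp_congr_right fun _ => imp_congr_right fun _ => ?_
  constructor <;> intro <;> linarith

theorem memSubDiff_of_le_penalized [CompactSpace Zs] (μ : Measure ↥Zs)
    [IsProbabilityMeasure μ] {w : C(↥Zs, ↥Zs) → ℝ} {Φ Φ' : C(↥Zs, ↥Zs)} {c δ : ℝ} (hc : 0 < c)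
    (h : ∀ (Ψ : C(↥Zs, Euc n)) (hΨ : ∀ z : ↥Zs, ((Φ' z : Euc n) + Ψ z) ∈ Zs),
      -w (addIn Φ' Ψ hΨ) - c * L2dist μ Φ (addIn Φ' Ψ hΨ) ^ 2
        ≤ -w Φ' - c * L2dist μ Φ Φ' ^ 2 + δ * supN Ψ) :
    memSubDiff μ δ w Φ' ((2 * c) • (toEuc Φ - toEuc Φ')) := by
  have hp : (2 * c) • (toEuc Φ' - toEuc Φ) = -((2 * c) • (toEuc Φ - toEuc Φ')) := by
    ext z
    simp [smul_sub]
  rw [memSubDiff_iff_memSuperDiff_neg, ← hp]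
  exact memSuperDiff_of_le_penalized μ hc (by simpa only [L2dist_comm μ Φ] using h)

theorem exists_penalized_memSuperDiff_memSubDiff [CompactSpace Zs] (μ : Measure ↥Zs)
    [IsProbabilityMeasure μ] {W₁ W₂ : C(↥Zs, ↥Zs) → ℝ} (hW₁c : Continuous W₁)
    (hW₂c : Continuous W₂) (hW₁ : BddAbove (range W₁)) (hW₂ : BddBelow (range W₂))
    (Φ₀ : C(↥Zs, ↥Zs)) {ε : ℝ} (hε : 0 < ε) :
    ∃ Φ₁ Φ₂, W₁ Φ₀ - W₂ Φ₀ ≤ W₁ Φ₁ - W₂ Φ₂ - ε⁻¹ * L2dist μ Φ₁ Φ₂ ^ 2 ∧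
      memSuperDiff μ ε W₁ Φ₁ ((2 * ε⁻¹) • (toEuc Φ₁ - toEuc Φ₂)) ∧
      memSubDiff μ ε W₂ Φ₂ ((2 * ε⁻¹) • (toEuc Φ₁ - toEuc Φ₂)) := by
  set f : C(↥Zs, ↥Zs) × C(↥Zs, ↥Zs) → ℝ :=
    fun q => W₁ q.1 - W₂ q.2 - ε⁻¹ * L2dist μ q.1 q.2 ^ 2 with hf
  have hfc : Continuous f := ((hW₁c.comp continuous_fst).sub (hW₂c.comp continuous_snd)).sub
    (continuous_const.mul (continuous_L2dist_sq μ))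
  obtain ⟨a, ha⟩ := hW₁
  obtain ⟨b, hb⟩ := hW₂
  have hbdd : BddAbove (range f) := ⟨a - b, by
    rintro _ ⟨q, rfl⟩
    have := ha ⟨q.1, rfl⟩
    have := hb ⟨q.2, rfl⟩
    have : 0 ≤ ε⁻¹ * L2dist μ q.1 q.2 ^ 2 := by positivity
    simp only [hf]
    linarith⟩
  obtain ⟨⟨Φ₁, Φ₂⟩, hgain, hmax⟩ :=
    exists_forall_le_add_mul_dist hfc.upperSemicontinuous hbdd (Φ₀, Φ₀) hε
  refine ⟨Φ₁, Φ₂, by simpa [hf, L2dist_self] using hgain,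
    memSuperDiff_of_le_penalized μ (inv_pos.2 hε) fun Ψ hΨ => ?_,
    memSubDiff_of_le_penalized μ (inv_pos.2 hε) fun Ψ hΨ => ?_⟩
  · have := hmax (addIn Φ₁ Ψ hΨ, Φ₂)
    rw [Prod.dist_eq, dist_addIn, dist_self, max_eq_left (supN_nonneg Ψ)] at this
    simp only [hf] at this
    linarith
  · have := hmax (Φ₁, addIn Φ₂ Ψ hΨ)
    rw [Prod.dist_eq, dist_addIn, dist_self, max_eq_right (supN_nonneg Ψ)] at this
    simp only [hf] at this
    linarith

theorem L2dist_le_of_penalized (μ : Measure ↥Zs) {W₁ W₂ : C(↥Zs, ↥Zs) → ℝ} {k ε M : ℝ}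
    (hk : 0 ≤ k) (hε : 0 < ε) (hW₂L : ∀ Φ Ψ : C(↥Zs, ↥Zs), |W₂ Φ - W₂ Ψ| ≤ k * L2dist μ Φ Ψ)
    (hM : ∀ Φ, W₁ Φ - W₂ Φ ≤ M) {Φ₀ Φ₁ Φ₂ : C(↥Zs, ↥Zs)} (hΦ₀ : M - ε < W₁ Φ₀ - W₂ Φ₀)
    (hgain : W₁ Φ₀ - W₂ Φ₀ ≤ W₁ Φ₁ - W₂ Φ₂ - ε⁻¹ * L2dist μ Φ₁ Φ₂ ^ 2) :
    L2dist μ Φ₁ Φ₂ ≤ (k + 1) * ε := by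
  set D := L2dist μ Φ₁ Φ₂
  have hpen : D ^ 2 ≤ ε * (k * D + ε) := by
    rw [← inv_mul_le_iff₀ hε]
    linarith [hM Φ₁, (abs_le.mp (hW₂L Φ₁ Φ₂)).2]
  by_contra! hlt
  have hD : 0 < D := lt_of_le_of_lt (by positivity) hlt
  nlinarith [mul_lt_mul_of_pos_right hlt hD, mul_lt_mul_of_pos_left hlt hε,
    mul_nonneg hk (sq_nonneg ε)]

section Hamiltonian

variable {U V : Type} {F : Euc n → U → V → Euc n} {l : Euc n → U → V → ℝ}

def hamIntegral (μ : Measure ↥Zs) (F : Euc n → U → V → Euc n) (l : Euc n → U → V → ℝ)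
    (Φ : C(↥Zs, ↥Zs)) (p : C(↥Zs, Euc n)) (u : U) (v : V) : ℝ :=
  ∫ z, (l (Φ z : Euc n) u v + inner ℝ (F (Φ z : Euc n) u v) (p z)) ∂μ

theorem abs_hamIntegral_le [CompactSpace Zs] (μ : Measure ↥Zs) [IsProbabilityMeasure μ]
    {Ml MF : ℝ} (hlb : ∀ w u v, |l w u v| ≤ Ml) (hFb : ∀ w u v, ‖F w u v‖ ≤ MF)
    (Φ : C(↥Zs, ↥Zs)) (p : C(↥Zs, Euc n)) (u : U) (v : V) :
    |hamIntegral μ F l Φ p u v| ≤ Ml + MF * ‖p‖ := by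
  have hpt (z : ↥Zs) : ‖l (Φ z : Euc n) u v + inner ℝ (F (Φ z : Euc n) u v) (p z)‖
      ≤ Ml + MF * ‖p‖ :=
    calc _ ≤ |l (Φ z : Euc n) u v| + ‖F (Φ z : Euc n) u v‖ * ‖p z‖ := by
          rw [← Real.norm_eq_abs]
          exact (norm_add_le _ _).trans (by gcongr; exact norm_inner_le_norm _ _)
      _ ≤ Ml + MF * ‖p‖ := by
          have hF := hFb (Φ z) u v
          gcongr
          · exact hlb _ u v
          · exact (norm_nonneg _).trans hF
          · exact p.norm_coe_le_norm z
  simpa [hamIntegral] using norm_integral_le_of_norm_le_const (μ := μ) (ae_of_all _ hpt)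

variable [TopologicalSpace U] [TopologicalSpace V]

theorem continuous_hamIntegrand (hFc : Continuous fun q : Euc n × U × V => F q.1 q.2.1 q.2.2)
    (hlc : Continuous fun q : Euc n × U × V => l q.1 q.2.1 q.2.2)
    (Φ : C(↥Zs, ↥Zs)) (p : C(↥Zs, Euc n)) (u : U) (v : V) :
    Continuous fun z => l (Φ z : Euc n) u v + inner ℝ (F (Φ z : Euc n) u v) (p z) := by
  have hq : Continuous fun z : ↥Zs => ((Φ z : Euc n), u, v) := by fun_prop
  exact (hlc.comp hq).add ((hFc.comp hq).inner p.continuous)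

theorem hamIntegral_le_add [CompactSpace Zs] (μ : Measure ↥Zs) [IsFiniteMeasure μ] {L : ℝ}
    (hFc : Continuous fun q : Euc n × U × V => F q.1 q.2.1 q.2.2)
    (hlc : Continuous fun q : Euc n × U × V => l q.1 q.2.1 q.2.2)
    (hFL : ∀ w w' a b, ‖F w a b - F w' a b‖ ≤ L * ‖w - w'‖)
    (hlL : ∀ w w' a b, |l w a b - l w' a b| ≤ L * ‖w - w'‖)
    (Φ Φ' : C(↥Zs, ↥Zs)) (p : C(↥Zs, Euc n)) (u : U) (v : V) :
    hamIntegral μ F l Φ p u v ≤ hamIntegral μ F l Φ' p u v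
      + L * ∫ z, ‖toEuc Φ z - toEuc Φ' z‖ * (1 + ‖p z‖) ∂μ := by
  have hi := (continuous_hamIntegrand hFc hlc Φ p u v).integrable_of_compactSpace (μ := μ)
  have hi' := (continuous_hamIntegrand hFc hlc Φ' p u v).integrable_of_compactSpace (μ := μ)
  rw [hamIntegral, hamIntegral, ← sub_le_iff_le_add', ← integral_sub hi hi',
    ← integral_const_mul]
  refine integral_mono (hi.sub hi') (by fun_prop : Continuous _).integrable_of_compactSpace
    fun z => ?_
  have hl := (abs_le.mp (hlL (Φ z) (Φ' z) u v)).2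
  have hF : inner ℝ (F (Φ z : Euc n) u v - F (Φ' z : Euc n) u v) (p z)
      ≤ L * ‖(Φ z : Euc n) - Φ' z‖ * ‖p z‖ :=
    (real_inner_le_norm _ _).trans (mul_le_mul_of_nonneg_right (hFL _ _ u v) (norm_nonneg _))
  rw [inner_sub_left] at hF
  simp only [toEuc_apply]
  linarith

theorem Ham_le_Ham_add [Nonempty U] [Nonempty V] [CompactSpace Zs] (μ : Measure ↥Zs)
    [IsProbabilityMeasure μ] {L : ℝ}
    (hFc : Continuous fun q : Euc n × U × V => F q.1 q.2.1 q.2.2)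
    (hlc : Continuous fun q : Euc n × U × V => l q.1 q.2.1 q.2.2)
    (hFb : ∃ M : ℝ, ∀ w a b, ‖F w a b‖ ≤ M) (hlb : ∃ M : ℝ, ∀ w a b, |l w a b| ≤ M)
    (hFL : ∀ w w' a b, ‖F w a b - F w' a b‖ ≤ L * ‖w - w'‖)
    (hlL : ∀ w w' a b, |l w a b - l w' a b| ≤ L * ‖w - w'‖)
    (Φ Φ' : C(↥Zs, ↥Zs)) (p : C(↥Zs, Euc n)) :
    Ham μ F l Φ p ≤ Ham μ F l Φ' p + L * ∫ z, ‖toEuc Φ z - toEuc Φ' z‖ * (1 + ‖p z‖) ∂μ := by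
  obtain ⟨MF, hMF⟩ := hFb
  obtain ⟨Ml, hMl⟩ := hlb
  have hbound := abs_hamIntegral_le μ hMl hMF (p := p)
  have bddAbove (Φ : C(↥Zs, ↥Zs)) (u : U) : BddAbove (range (hamIntegral μ F l Φ p u)) :=
    ⟨Ml + MF * ‖p‖, by rintro _ ⟨v, rfl⟩; exact (abs_le.mp (hbound Φ u v)).2⟩
  refine iInf_iSup_le_iInf_iSup_add (bddAbove Φ') ⟨-(Ml + MF * ‖p‖), ?_⟩
    (hamIntegral_le_add μ hFc hlc hFL hlL Φ Φ' p)
  rintro _ ⟨u, rfl⟩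
  exact (abs_le.mp (hbound Φ u (Classical.arbitrary V))).1.trans (le_ciSup (bddAbove Φ u) _)

theorem Ham_smul_sub_le [Nonempty U] [Nonempty V] [CompactSpace Zs] (μ : Measure ↥Zs)
    [IsProbabilityMeasure μ] {L c : ℝ} (hL : 0 ≤ L) (hc : 0 ≤ c)
    (hFc : Continuous fun q : Euc n × U × V => F q.1 q.2.1 q.2.2)
    (hlc : Continuous fun q : Euc n × U × V => l q.1 q.2.1 q.2.2)
    (hFb : ∃ M : ℝ, ∀ w a b, ‖F w a b‖ ≤ M) (hlb : ∃ M : ℝ, ∀ w a b, |l w a b| ≤ M)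
    (hFL : ∀ w w' a b, ‖F w a b - F w' a b‖ ≤ L * ‖w - w'‖)
    (hlL : ∀ w w' a b, |l w a b - l w' a b| ≤ L * ‖w - w'‖) (Φ Φ' : C(↥Zs, ↥Zs)) :
    Ham μ F l Φ (c • (toEuc Φ - toEuc Φ')) ≤ Ham μ F l Φ' (c • (toEuc Φ - toEuc Φ'))
      + L * (L2dist μ Φ Φ' + c * L2dist μ Φ Φ' ^ 2) := by
  refine (Ham_le_Ham_add μ hFc hlc hFb hlb hFL hlL Φ Φ' _).trans
    (add_le_add_right (mul_le_mul_of_nonneg_left ?_ hL) _)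
  have expand (z : ↥Zs) : ‖toEuc Φ z - toEuc Φ' z‖ * (1 + ‖(c • (toEuc Φ - toEuc Φ')) z‖)
      = ‖toEuc Φ z - toEuc Φ' z‖ + c * ‖toEuc Φ z - toEuc Φ' z‖ ^ 2 := by
    rw [ContinuousMap.smul_apply, norm_smul, Real.norm_of_nonneg hc]
    simp only [ContinuousMap.sub_apply]
    ring
  simp_rw [expand]
  rw [integral_add (by fun_prop : Continuous _).integrable_of_compactSpace
    (by fun_prop : Continuous _).integrable_of_compactSpace, integral_const_mul, L2dist_sq]
  gcongr
  exact integral_norm_sub_le_L2dist μ Φ Φ'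

theorem exists_forall_lam_mul_sub_le_mul [Nonempty U] [Nonempty V] [CompactSpace Zs]
    (μ : Measure ↥Zs) [IsProbabilityMeasure μ] {lam L k : ℝ} (hlam : 0 ≤ lam) (hL : 0 ≤ L)
    (hk : 0 ≤ k) (hFc : Continuous fun q : Euc n × U × V => F q.1 q.2.1 q.2.2)
    (hlc : Continuous fun q : Euc n × U × V => l q.1 q.2.1 q.2.2)
    (hFb : ∃ M : ℝ, ∀ w a b, ‖F w a b‖ ≤ M) (hlb : ∃ M : ℝ, ∀ w a b, |l w a b| ≤ M)
    (hFL : ∀ w w' a b, ‖F w a b - F w' a b‖ ≤ L * ‖w - w'‖)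
    (hlL : ∀ w w' a b, |l w a b - l w' a b| ≤ L * ‖w - w'‖)
    {O : Set C(↥Zs, ↥Zs)} {W₁ W₂ : C(↥Zs, ↥Zs) → ℝ}
    (hW₁c : Continuous W₁) (hW₂c : Continuous W₂)
    (hW₁b : ∃ M : ℝ, ∀ Φ, |W₁ Φ| ≤ M) (hW₂b : ∃ M : ℝ, ∀ Φ, |W₂ Φ| ≤ M)
    (hW₁L : ∀ Φ Ψ : C(↥Zs, ↥Zs), |W₁ Φ - W₁ Ψ| ≤ k * L2dist μ Φ Ψ)
    (hW₂L : ∀ Φ Ψ : C(↥Zs, ↥Zs), |W₂ Φ - W₂ Ψ| ≤ k * L2dist μ Φ Ψ)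
    (hsub : IsViscositySubsolution lam μ F l O W₁)
    (hsup : IsViscositySupersolution lam μ F l O W₂)
    (hbd : ∀ Φ : C(↥Zs, ↥Zs), Φ ∉ O → W₁ Φ ≤ W₂ Φ) :
    ∃ K, ∀ ε > 0, ∀ Φ, lam * (W₁ Φ - W₂ Φ) ≤ K * ε := by
  obtain ⟨C₁, hC₁, hsub⟩ := hsub
  obtain ⟨C₂, hC₂, hsup⟩ := hsup
  obtain ⟨M₁, hM₁⟩ := hW₁b
  obtain ⟨M₂, hM₂⟩ := hW₂b
  have hbdd : BddAbove (range fun Φ => W₁ Φ - W₂ Φ) := ⟨M₁ + M₂, by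
    rintro _ ⟨Φ, rfl⟩
    linarith [abs_le.mp (hM₁ Φ), abs_le.mp (hM₂ Φ)]⟩
  refine ⟨lam * (k * (k + 1) + 1) + (C₁ + C₂ + L * (k + 1) + 2 * L * (k * (k + 1) + 1)),
    fun ε hε Φ => ?_⟩
  set M := sSup (range fun Φ => W₁ Φ - W₂ Φ)
  have hM (Φ : C(↥Zs, ↥Zs)) : W₁ Φ - W₂ Φ ≤ M := le_csSup hbdd ⟨Φ, rfl⟩
  obtain ⟨_, ⟨Φ₀, rfl⟩, hΦ₀⟩ := exists_lt_of_lt_csSup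
    (⟨_, Φ, rfl⟩ : (range fun Φ => W₁ Φ - W₂ Φ).Nonempty) (sub_lt_self M hε)
  obtain ⟨Φ₁, Φ₂, hgain, hsuper, hsubd⟩ := exists_penalized_memSuperDiff_memSubDiff μ hW₁c hW₂c
    ⟨M₁, by rintro _ ⟨Φ, rfl⟩; exact (abs_le.mp (hM₁ Φ)).2⟩
    ⟨-M₂, by rintro _ ⟨Φ, rfl⟩; exact (abs_le.mp (hM₂ Φ)).1⟩ Φ₀ hε
  set D := L2dist μ Φ₁ Φ₂
  have hD : D ≤ (k + 1) * ε := L2dist_le_of_penalized μ hk hε hW₂L hM hΦ₀ hgain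
  have hkD : k * D ≤ k * ((k + 1) * ε) := mul_le_mul_of_nonneg_left hD hk
  have hgap : lam * (M - ε) ≤ lam * (W₁ Φ₁ - W₂ Φ₂) :=
    mul_le_mul_of_nonneg_left (by nlinarith [inv_pos.2 hε, sq_nonneg D]) hlam
  have hΦ : lam * (W₁ Φ - W₂ Φ) ≤ lam * M := mul_le_mul_of_nonneg_left (hM Φ) hlam
  by_cases hO : Φ₁ ∈ O ∧ Φ₂ ∈ O
  · have h₁ := hsub ε hε Φ₁ hO.1 _ hsuper
    have h₂ := hsup ε hε Φ₂ hO.2 _ hsubd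
    have hHam := Ham_smul_sub_le μ (c := 2 * ε⁻¹) hL (by positivity) hFc hlc hFb hlb hFL hlL Φ₁ Φ₂
    have hpen : ε⁻¹ * D ^ 2 ≤ k * D + ε := by linarith [hM Φ₁, (abs_le.mp (hW₂L Φ₁ Φ₂)).2]
    have hLD : L * (D + 2 * ε⁻¹ * D ^ 2) ≤ L * ((k + 1) * ε + 2 * (k * ((k + 1) * ε) + ε)) :=
      mul_le_mul_of_nonneg_left (by linarith) hL
    have : 0 ≤ lam * (k * (k + 1)) * ε := by positivity
    linarith
  · have hG : W₁ Φ₁ - W₂ Φ₂ ≤ k * D := by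
      rcases not_and_or.mp hO with hΦ₁ | hΦ₂
      · linarith [hbd Φ₁ hΦ₁, (abs_le.mp (hW₂L Φ₁ Φ₂)).2]
      · linarith [hbd Φ₂ hΦ₂, (abs_le.mp (hW₁L Φ₁ Φ₂)).2]
    have := mul_le_mul_of_nonneg_left (hG.trans hkD) hlam
    have : 0 ≤ (C₁ + C₂ + L * (k + 1) + 2 * L * (k * (k + 1) + 1)) * ε := by positivity
    linarith

end Hamiltonian

end ContinuousSelfMaps

theorem comparison_principle_general
    (n : ℕ) (Zs : Set (Euc n)) (hZc : IsCompact Zs)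
    (μ₀ : Measure ↥Zs) [IsProbabilityMeasure μ₀]
    (U V : Type) [MetricSpace U] [Nonempty U]
    [MetricSpace V] [Nonempty V]
    (lam L k : ℝ) (hlam : 0 < lam) (hL : 0 ≤ L) (hk : 0 < k)
    (F : Euc n → U → V → Euc n) (l : Euc n → U → V → ℝ)
    (hFc : Continuous fun q : Euc n × U × V => F q.1 q.2.1 q.2.2)
    (hlc : Continuous fun q : Euc n × U × V => l q.1 q.2.1 q.2.2)
    (hFb : ∃ M : ℝ, ∀ w a b, ‖F w a b‖ ≤ M)
    (hlb : ∃ M : ℝ, ∀ w a b, |l w a b| ≤ M)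
    (hFL : ∀ w w' a b, ‖F w a b - F w' a b‖ ≤ L * ‖w - w'‖)
    (hlL : ∀ w w' a b, |l w a b - l w' a b| ≤ L * ‖w - w'‖)
    (O : Set C(↥Zs, ↥Zs))
    (W₁ W₂ : C(↥Zs, ↥Zs) → ℝ)
    (hW₁c : Continuous W₁) (hW₂c : Continuous W₂)
    (hW₁b : ∃ M : ℝ, ∀ Φ, |W₁ Φ| ≤ M) (hW₂b : ∃ M : ℝ, ∀ Φ, |W₂ Φ| ≤ M)
    (hW₁L : ∀ Φ Ψ : C(↥Zs, ↥Zs), |W₁ Φ - W₁ Ψ| ≤ k * L2dist μ₀ Φ Ψ)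
    (hW₂L : ∀ Φ Ψ : C(↥Zs, ↥Zs), |W₂ Φ - W₂ Ψ| ≤ k * L2dist μ₀ Φ Ψ)
    (hsub : IsViscositySubsolution lam μ₀ F l O W₁)
    (hsup : IsViscositySupersolution lam μ₀ F l O W₂)
    (hbd : ∀ Φ : C(↥Zs, ↥Zs), Φ ∉ O → W₁ Φ ≤ W₂ Φ) :
    ∀ Φ ∈ O, W₁ Φ ≤ W₂ Φ := by
  have : CompactSpace ↥Zs := isCompact_iff_compactSpace.mp hZc
  obtain ⟨K, hK⟩ := exists_forall_lam_mul_sub_le_mul μ₀ hlam.le hL hk.le hFc hlc hFb hlb hFL hlL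
    hW₁c hW₂c hW₁b hW₂b hW₁L hW₂L hsub hsup hbd
  intro Φ _
  have hΦ := nonpos_of_forall_pos_le_mul fun ε hε => hK ε hε Φ
  exact sub_nonpos.mp (nonpos_of_mul_nonpos_right hΦ hlam)

/-- Comparison principle for the Hamilton–Jacobi–Isaacs equation: a bounded continuous
`L²`-Lipschitz viscosity subsolution lying below a supersolution outside `O` lies below
it on `O` as well. -/
theorem comparison_principle
    (n : ℕ) (Zs : Set (Euc n)) (hZc : IsCompact Zs) (hZn : Zs.Nonempty)
    (μ₀ : Measure ↥Zs) [IsProbabilityMeasure μ₀]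
    (U V : Type) [MetricSpace U] [CompactSpace U] [Nonempty U]
    [MetricSpace V] [CompactSpace V] [Nonempty V]
    (lam L k : ℝ) (hlam : 0 < lam) (hL : 0 ≤ L) (hk : 0 < k)
    (F : Euc n → U → V → Euc n) (l : Euc n → U → V → ℝ)
    (hFc : Continuous fun q : Euc n × U × V => F q.1 q.2.1 q.2.2)
    (hlc : Continuous fun q : Euc n × U × V => l q.1 q.2.1 q.2.2)
    (hFb : ∃ M : ℝ, ∀ w a b, ‖F w a b‖ ≤ M)
    (hlb : ∃ M : ℝ, ∀ w a b, |l w a b| ≤ M)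
    (hFL : ∀ w w' a b, ‖F w a b - F w' a b‖ ≤ L * ‖w - w'‖)
    (hlL : ∀ w w' a b, |l w a b - l w' a b| ≤ L * ‖w - w'‖)
    (O : Set C(↥Zs, ↥Zs)) (hO : IsOpen O)
    (W₁ W₂ : C(↥Zs, ↥Zs) → ℝ)
    (hW₁c : Continuous W₁) (hW₂c : Continuous W₂)
    (hW₁b : ∃ M : ℝ, ∀ Φ, |W₁ Φ| ≤ M) (hW₂b : ∃ M : ℝ, ∀ Φ, |W₂ Φ| ≤ M)
    (hW₁L : ∀ Φ Ψ : C(↥Zs, ↥Zs), |W₁ Φ - W₁ Ψ| ≤ k * L2dist μ₀ Φ Ψ)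
    (hW₂L : ∀ Φ Ψ : C(↥Zs, ↥Zs), |W₂ Φ - W₂ Ψ| ≤ k * L2dist μ₀ Φ Ψ)
    (hsub : IsViscositySubsolution lam μ₀ F l O W₁)
    (hsup : IsViscositySupersolution lam μ₀ F l O W₂)
    (hbd : ∀ Φ : C(↥Zs, ↥Zs), Φ ∉ O → W₁ Φ ≤ W₂ Φ) :
    ∀ Φ ∈ O, W₁ Φ ≤ W₂ Φ :=
  comparison_principle_general n Zs hZc μ₀ U V lam L k hlam hL hk F l hFc hlc hFb hlb hFL hlL O W₁
    W₂ hW₁c hW₂c hW₁b hW₂b hW₁L hW₂L hsub hsup hbd
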